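/- Let {z_n} be a sequence in the open unit disc 𝔻 such that the reproducing-kernel embedding constants ℛ(μ_N) of the measures μ_N = Σ_{k ≥ N} (1 − |z_k|²) δ_{z_k} satisfy ℛ(μ_N) → 1 as N → ∞. Then for all n, k ≥ N with n ≠ k one has 1 − ρ(z_n, z_k)² = (1 − |z_n|²)(1 − |z_k|²)/|1 − \overline{z_k}z_n|² ≤ ℛ(μ_N)² − 1, and for every n ≥ N, Π_{k ≥ N, k ≠ n} |(z_k − z_n)/(1 − \overline{z_k}z_n)|² ≥ 1 − (ℛ(μ_N)² − 1); in particular the tails of the sequence are separated and Π_{k ≠ n} |(z_k − z_n)/(1 − \overline{z_k}z_n)| → 1, so {z_n} is thin. -/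

import Mathlib

open Complex MeasureTheory Metric Set Filter Topology ComplexConjugate

noncomputable section

namespace ThinPaper

/-- `δ j = ∏_{k ≠ j} |(z j - z k)/(1 - conj (z k) * z j)|`. -/
def delta (z : ℕ → ℂ) (j : ℕ) : ℝ :=
  ∏' k : {k : ℕ // k ≠ j}, ‖(z j - z k) / (1 - conj (z (k : ℕ)) * z j)‖

/-- A sequence in the unit disc is *thin* if `δ j → 1`. -/
def IsThin (z : ℕ → ℂ) : Prop := Tendsto (delta z) atTop (𝓝 1)

/-- Membership in `H^∞`: bounded and analytic on the open unit disc. -/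
def MemHInf (f : ℂ → ℂ) : Prop :=
  DifferentiableOn ℂ f (ball (0 : ℂ) 1) ∧ ∃ M : ℝ, ∀ w ∈ ball (0 : ℂ) 1, ‖f w‖ ≤ M

/-- The supremum norm of a function on the open unit disc. -/
def hinfNorm (f : ℂ → ℂ) : ℝ := ⨆ w : ball (0 : ℂ) 1, ‖f (w : ℂ)‖

/-- A bounded sequence of complex numbers (member of `ℓ^∞`). -/
def BddSeq (a : ℕ → ℂ) : Prop := ∃ M : ℝ, ∀ n, ‖a n‖ ≤ M

/-- `sup_{j ≥ N} |a j|`. -/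
def supFrom (N : ℕ) (a : ℕ → ℂ) : ℝ := ⨆ j : {j : ℕ // N ≤ j}, ‖a (j : ℕ)‖

/-- Eventual 1-interpolating sequence for `H^∞` (EIS_∞). -/
def IsEISInf (z : ℕ → ℂ) : Prop :=
  ∀ ε : ℝ, 0 < ε → ∃ N : ℕ, ∀ a : ℕ → ℂ, BddSeq a →
    ∃ f : ℂ → ℂ, MemHInf f ∧ (∀ n, N ≤ n → f (z n) = a n) ∧
      hinfNorm f ≤ (1 + ε) * supFrom N a

/-- Interpolating sequence for `H^∞`. -/
def IsInterpolating (z : ℕ → ℂ) : Prop :=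
  ∀ a : ℕ → ℂ, BddSeq a → ∃ f : ℂ → ℂ, MemHInf f ∧ ∀ n, f (z n) = a n

/-- The sequence space `ℓ²(ℕ, ℂ)`, serving as the coefficient model of the Hardy
space `H²`. -/
abbrev ell2 : Type := lp (fun _ : ℕ => ℂ) 2

/-- Evaluation of an `H²` function (given by its Taylor coefficients) at `w ∈ 𝔻`. -/
def evalH2 (f : ell2) (w : ℂ) : ℂ := ∑' n : ℕ, f n * w ^ n

/-- Taylor coefficients of the normalized reproducing kernel
`h_w = √(1-|w|²)/(1 - conj w · z)` of `H²`. -/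
def hkerFun (w : ℂ) : ℕ → ℂ := fun n => ((Real.sqrt (1 - ‖w‖ ^ 2) : ℝ) : ℂ) * (conj w) ^ n

open scoped Classical in
/-- The normalized reproducing kernel `h_w` as an element of `H²` (coefficient model). -/
def hker (w : ℂ) : ell2 := if h : Memℓp (hkerFun w) 2 then ⟨hkerFun w, h⟩ else 0

/-- The Blaschke product with zero sequence `z`. -/
def blaschke (z : ℕ → ℂ) (w : ℂ) : ℂ :=
  ∏' n : ℕ, (-(conj (z n)) / (‖z n‖ : ℂ)) * ((w - z n) / (1 - conj (z n) * w))

/-- The subspace `B·H²` of `H²` (as a set of coefficient sequences): those `g` whose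
evaluation on the disc factors as `B · (eval f)` for some `f ∈ H²`. -/
def BH2set (z : ℕ → ℂ) : Set ell2 :=
  {g | ∃ f : ell2, ∀ w ∈ ball (0 : ℂ) 1, evalH2 g w = blaschke z w * evalH2 f w}

/-- The model space `K_B = H² ⊖ B·H²`. -/
def KB (z : ℕ → ℂ) : Submodule ℂ ell2 := (Submodule.span ℂ (BH2set z))ᗮ

/-- `{x n}` is an asymptotically orthonormal basic sequence (AOB). -/
def IsAOB {H : Type*} [NormedAddCommGroup H] [InnerProductSpace ℂ H] (x : ℕ → H) : Prop :=
  ∃ c C : ℕ → ℝ, (∀ N, 0 < c N) ∧ (∀ N, 0 < C N) ∧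
    Tendsto c atTop (𝓝 1) ∧ Tendsto C atTop (𝓝 1) ∧
    ∀ (N : ℕ) (s : Finset ℕ), (∀ n ∈ s, N ≤ n) → ∀ a : ℕ → ℂ,
      c N * ∑ n ∈ s, ‖a n‖ ^ 2 ≤ ‖∑ n ∈ s, a n • x n‖ ^ 2 ∧
      ‖∑ n ∈ s, a n • x n‖ ^ 2 ≤ C N * ∑ n ∈ s, ‖a n‖ ^ 2

/-- `{x n}` is a complete AOB in the (closed) subspace `V`: it is an AOB and its closed
linear span is `V`. -/
def IsCompleteAOBIn {H : Type*} [NormedAddCommGroup H] [InnerProductSpace ℂ H]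
    (x : ℕ → H) (V : Submodule ℂ H) : Prop :=
  IsAOB x ∧ (Submodule.span ℂ (Set.range x)).topologicalClosure = V

open scoped ENNReal

/-- Taylor coefficients of the reproducing kernel `k_ζ = 1/(1 - conj ζ · w)` of `H²`. -/
def kerFun (ζ : ℂ) : ℕ → ℂ := fun n => (conj ζ) ^ n

open scoped Classical in
/-- The reproducing kernel `k_ζ` as an element of `H²` (coefficient model). -/
def ker2 (ζ : ℂ) : ell2 := if h : Memℓp (kerFun ζ) 2 then ⟨kerFun ζ, h⟩ else 0

/-- The measure `μ_N = ∑_{k ≥ N} (1 - |z k|²) δ_{z k}`. -/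
def muN (z : ℕ → ℂ) (N : ℕ) : Measure ℂ :=
  Measure.sum fun k : {k : ℕ // N ≤ k} =>
    (ENNReal.ofReal (1 - ‖z (k : ℕ)‖ ^ 2)) • Measure.dirac (z (k : ℕ))

/-- The Carleson embedding constant `𝒞(μ) = sup_{0 ≠ f ∈ H²} ‖f‖²_{L²(μ)}/‖f‖²₂`
(with value in `ℝ≥0∞`). -/
def carlesonConst (μ : Measure ℂ) : ℝ≥0∞ :=
  ⨆ f : {f : ell2 // f ≠ 0},
    (∫⁻ w, ENNReal.ofReal (‖evalH2 (f : ell2) w‖ ^ 2) ∂μ) /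
      ENNReal.ofReal (‖(f : ell2)‖ ^ 2)

/-- The reproducing kernel embedding constant `ℛ(μ) = sup_ζ ‖k_ζ‖_{L²(μ)}/‖k_ζ‖₂`
(with value in `ℝ≥0∞`). -/
def rkConst (μ : Measure ℂ) : ℝ≥0∞ :=
  ⨆ ζ : ball (0 : ℂ) 1,
    (∫⁻ w, ENNReal.ofReal (‖evalH2 (ker2 (ζ : ℂ)) w‖ ^ 2) ∂μ) ^ (1 / 2 : ℝ) /
      ENNReal.ofReal ‖ker2 (ζ : ℂ)‖

/-- The pseudohyperbolic distance `ρ(a, b) = |(a - b)/(1 - conj b · a)|`. -/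
def rho (a b : ℂ) : ℝ := ‖(a - b) / (1 - conj b * a)‖

-- algebraic identity
lemma key_id (a b : ℂ) :
    ‖1 - conj b * a‖ ^ 2 - ‖a - b‖ ^ 2
      = (1 - ‖a‖ ^ 2) * (1 - ‖b‖ ^ 2) := by
  simp only [Complex.sq_norm, Complex.normSq_apply, Complex.sub_re, Complex.sub_im,
    Complex.mul_re, Complex.mul_im, Complex.one_re, Complex.one_im,
    Complex.conj_re, Complex.conj_im]
  ring

lemma one_sub_ne (a b : ℂ) (ha : ‖a‖ < 1) (hb : ‖b‖ < 1) :
    1 - conj b * a ≠ 0 := by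
  intro h
  have : ‖conj b * a‖ = 1 := by
    have : conj b * a = 1 := by linear_combination -h
    simp [this]
  rw [norm_mul, Complex.norm_conj] at this
  nlinarith [norm_nonneg a, norm_nonneg b]

lemma abs_symm (a b : ℂ) : ‖1 - conj b * a‖ = ‖1 - conj a * b‖ := by
  rw [← Complex.norm_conj (1 - conj a * b)]
  congr 1
  simp [map_sub, map_mul, mul_comm]

lemma ratio_sq (a b : ℂ) (ha : ‖a‖ < 1) (hb : ‖b‖ < 1) :
    ‖(a - b) / (1 - conj b * a)‖ ^ 2
      = 1 - (1 - ‖a‖ ^ 2) * (1 - ‖b‖ ^ 2) /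
          ‖1 - conj b * a‖ ^ 2 := by
  have hne := one_sub_ne a b ha hb
  have hpos : 0 < ‖1 - conj b * a‖ := norm_pos_iff.mpr hne
  rw [norm_div, div_pow]
  have := key_id a b
  have hpos' : ‖1 - conj b * a‖ ^ 2 ≠ 0 := by positivity
  rw [eq_sub_iff_add_eq, ← add_div, div_eq_one_iff_eq hpos']
  linarith


lemma memker (ζ : ℂ) (hζ : ‖ζ‖ < 1) : Memℓp (kerFun ζ) 2 := by
  apply memℓp_gen
  have h2 : (2 : ℝ≥0∞).toReal = 2 := by norm_num
  rw [h2]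
  have : ∀ n : ℕ, ‖kerFun ζ n‖ ^ (2:ℝ) = (‖ζ‖ ^ 2) ^ n := by
    intro n
    rw [kerFun, show (2:ℝ) = ((2:ℕ):ℝ) by norm_num, Real.rpow_natCast]
    simp only [norm_pow, Complex.norm_conj, ← pow_mul]
    rw [mul_comm]
  have hs : Summable fun n : ℕ => (‖ζ‖ ^ 2) ^ n :=
    summable_geometric_of_lt_one (by positivity) (by nlinarith [norm_nonneg ζ])
  exact hs.congr fun n => (this n).symm

lemma ker2_coe (ζ : ℂ) (hζ : ‖ζ‖ < 1) (n : ℕ) :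
    (ker2 ζ : ∀ _ : ℕ, ℂ) n = (conj ζ) ^ n := by
  rw [ker2, dif_pos (memker ζ hζ)]; rfl

lemma eval_ker (ζ w : ℂ) (hζ : ‖ζ‖ < 1) (hw : ‖w‖ < 1) :
    evalH2 (ker2 ζ) w = (1 - conj ζ * w)⁻¹ := by
  rw [evalH2]
  have : ∀ n : ℕ, (ker2 ζ : ∀ _ : ℕ, ℂ) n * w ^ n = (conj ζ * w) ^ n := by
    intro n; rw [ker2_coe ζ hζ, mul_pow]
  rw [tsum_congr this, tsum_geometric_of_norm_lt_one]
  rw [norm_mul, Complex.norm_conj]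
  nlinarith [norm_nonneg ζ, norm_nonneg w]

lemma norm_ker_sq (ζ : ℂ) (hζ : ‖ζ‖ < 1) :
    ‖ker2 ζ‖ ^ 2 = (1 - ‖ζ‖ ^ 2)⁻¹ := by
  have h2 : (0:ℝ) < (2 : ℝ≥0∞).toReal := by norm_num
  rw [lp.norm_eq_tsum_rpow h2]
  have h2' : (2 : ℝ≥0∞).toReal = (2:ℝ) := by norm_num
  have hcoe : ∀ n : ℕ, ‖(ker2 ζ : ∀ _ : ℕ, ℂ) n‖ ^ (2 : ℝ≥0∞).toReal = (‖ζ‖ ^ 2) ^ n := by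
    intro n
    rw [ker2_coe ζ hζ, h2', show (2:ℝ) = ((2:ℕ):ℝ) by norm_num, Real.rpow_natCast]
    simp only [norm_pow, Complex.norm_conj, ← pow_mul]
    rw [mul_comm]
  rw [tsum_congr hcoe, tsum_geometric_of_lt_one (by positivity) (by nlinarith [norm_nonneg ζ])]
  have h1 : (0:ℝ) < 1 - ‖ζ‖ ^ 2 := by nlinarith [norm_nonneg ζ]
  rw [h2', ← Real.rpow_natCast _ 2, ← Real.rpow_mul (le_of_lt (inv_pos.mpr h1))]
  norm_num



lemma zabs_lt (z : ℕ → ℂ) (hz : ∀ n, z n ∈ ball (0 : ℂ) 1) (n : ℕ) : ‖z n‖ < 1 := by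
  have := hz n; rwa [mem_ball, Complex.dist_eq, sub_zero] at this

lemma lintegral_muN (z : ℕ → ℂ) (N : ℕ) (F : ℂ → ℝ≥0∞) :
    ∫⁻ w, F w ∂ muN z N
      = ∑' k : {k : ℕ // N ≤ k},
          ENNReal.ofReal (1 - ‖z (k : ℕ)‖ ^ 2) * F (z (k : ℕ)) := by
  rw [muN, lintegral_sum_measure]
  exact tsum_congr fun k => by rw [lintegral_smul_measure, lintegral_dirac, smul_eq_mul]

lemma rk_ge (z : ℕ → ℂ) (N : ℕ) (ζ : ℂ) (hζ : ‖ζ‖ < 1) :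
    (∑' k : {k : ℕ // N ≤ k},
        ENNReal.ofReal (1 - ‖z (k : ℕ)‖ ^ 2) *
          ENNReal.ofReal (‖evalH2 (ker2 ζ) (z (k : ℕ))‖ ^ 2)) *
      ENNReal.ofReal (1 - ‖ζ‖ ^ 2) ≤ rkConst (muN z N) ^ 2 := by
  have hmem : ζ ∈ ball (0 : ℂ) 1 := by
    rw [mem_ball, Complex.dist_eq, sub_zero]; exact hζ
  set A : ℝ≥0∞ := ∫⁻ w, ENNReal.ofReal (‖evalH2 (ker2 ζ) w‖ ^ 2) ∂ muN z N with hA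
  have hv : A ^ (1/2 : ℝ) / ENNReal.ofReal ‖ker2 ζ‖ ≤ rkConst (muN z N) :=
    le_iSup (fun ζ : ball (0:ℂ) 1 =>
      (∫⁻ w, ENNReal.ofReal (‖evalH2 (ker2 (ζ:ℂ)) w‖ ^ 2) ∂ muN z N) ^ (1/2:ℝ) /
        ENNReal.ofReal ‖ker2 (ζ:ℂ)‖) (⟨ζ, hmem⟩ : ball (0:ℂ) 1)
  have h1 : (0:ℝ) < 1 - ‖ζ‖ ^ 2 := by nlinarith [norm_nonneg ζ]
  have hsq : (A ^ (1/2 : ℝ) / ENNReal.ofReal ‖ker2 ζ‖) ^ 2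
      = A * ENNReal.ofReal (1 - ‖ζ‖ ^ 2) := by
    rw [div_eq_mul_inv, mul_pow, ← ENNReal.inv_pow, ← ENNReal.ofReal_pow (norm_nonneg _),
      norm_ker_sq ζ hζ, ENNReal.ofReal_inv_of_pos h1, inv_inv]
    congr 1
    rw [← ENNReal.rpow_natCast (A ^ (1/2:ℝ)) 2, ← ENNReal.rpow_mul]
    norm_num
  have hAt : A = ∑' k : {k : ℕ // N ≤ k},
      ENNReal.ofReal (1 - ‖z (k : ℕ)‖ ^ 2) *
        ENNReal.ofReal (‖evalH2 (ker2 ζ) (z (k : ℕ))‖ ^ 2) := by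
    rw [hA, lintegral_muN]
  rw [← hAt, ← hsq, sq, sq]
  exact mul_le_mul' hv hv

/-- `g z n k = (1-|z k|²)(1-|z n|²)/|1 - conj (z n) z k|²`. -/
def g (z : ℕ → ℂ) (n k : ℕ) : ℝ :=
  (1 - ‖z k‖ ^ 2) * (1 - ‖z n‖ ^ 2) /
    ‖1 - conj (z n) * z k‖ ^ 2

lemma g_nonneg (z : ℕ → ℂ) (hz : ∀ n, z n ∈ ball (0 : ℂ) 1) (n k : ℕ) : 0 ≤ g z n k := by
  have hn := zabs_lt z hz n; have hk := zabs_lt z hz k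
  have h2 : 0 ≤ (1 - ‖z k‖ ^ 2) := by nlinarith [norm_nonneg (z k)]
  have h3 : 0 ≤ (1 - ‖z n‖ ^ 2) := by nlinarith [norm_nonneg (z n)]
  rw [g]
  positivity

lemma g_self (z : ℕ → ℂ) (hz : ∀ n, z n ∈ ball (0 : ℂ) 1) (n : ℕ) : g z n n = 1 := by
  have hn := zabs_lt z hz n
  have h1 : (0:ℝ) < 1 - ‖z n‖ ^ 2 := by nlinarith [norm_nonneg (z n)]
  have : (1 : ℂ) - conj (z n) * z n = ((1 - ‖z n‖ ^ 2 : ℝ) : ℂ) := by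
    rw [Complex.conj_mul']; push_cast; rfl
  rw [g, this, Complex.norm_real, Real.norm_eq_abs, abs_of_pos h1]
  field_simp

lemma sum_bound (z : ℕ → ℂ) (hz : ∀ n, z n ∈ ball (0 : ℂ) 1) (N n : ℕ) (hn : N ≤ n)
    (s : Finset {k : ℕ // N ≤ k}) :
    ENNReal.ofReal (∑ k ∈ s, g z n (k : ℕ)) ≤ rkConst (muN z N) ^ 2 := by
  have hzn := zabs_lt z hz n
  refine le_trans ?_ (rk_ge z N (z n) hzn)
  have h1n : (0:ℝ) ≤ 1 - ‖z n‖ ^ 2 := by nlinarith [norm_nonneg (z n)]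
  have hterm : ∀ k : {k : ℕ // N ≤ k}, g z n (k : ℕ)
      = (1 - ‖z (k:ℕ)‖ ^ 2) * ‖evalH2 (ker2 (z n)) (z (k:ℕ))‖ ^ 2
        * (1 - ‖z n‖ ^ 2) := by
    intro k
    rw [eval_ker (z n) (z (k:ℕ)) hzn (zabs_lt z hz (k:ℕ)), norm_inv, inv_pow, g]
    ring
  have hnn : ∀ k ∈ s, (0:ℝ) ≤ (1 - ‖z (k:ℕ)‖ ^ 2) *
      ‖evalH2 (ker2 (z n)) (z (k:ℕ))‖ ^ 2 := by
    intro k _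
    have h2 : (0:ℝ) ≤ 1 - ‖z (k:ℕ)‖ ^ 2 := by
      have := zabs_lt z hz (k:ℕ); nlinarith [norm_nonneg (z (k:ℕ))]
    positivity
  have hsum : (∑ k ∈ s, g z n (k:ℕ))
      = (∑ k ∈ s, (1 - ‖z (k:ℕ)‖ ^ 2) *
          ‖evalH2 (ker2 (z n)) (z (k:ℕ))‖ ^ 2) * (1 - ‖z n‖ ^ 2) := by
    rw [Finset.sum_mul]; exact Finset.sum_congr rfl fun k _ => hterm k
  rw [hsum, ENNReal.ofReal_mul (Finset.sum_nonneg hnn), ENNReal.ofReal_sum_of_nonneg hnn]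
  refine mul_le_mul_left (le_trans (le_of_eq (Finset.sum_congr rfl fun k hk => ?_))
    (ENNReal.sum_le_tsum s)) _
  rw [ENNReal.ofReal_mul, ENNReal.ofReal_pow (norm_nonneg _)]
  have := zabs_lt z hz (k:ℕ); nlinarith [norm_nonneg (z (k:ℕ))]



lemma ratio_sq' (a b : ℂ) (ha : ‖a‖ < 1) (hb : ‖b‖ < 1) :
    ‖(a - b) / (1 - conj a * b)‖ ^ 2
      = 1 - (1 - ‖a‖ ^ 2) * (1 - ‖b‖ ^ 2) /
          ‖1 - conj b * a‖ ^ 2 := by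
  have h : ‖(a - b) / (1 - conj a * b)‖
      = ‖(a - b) / (1 - conj b * a)‖ := by
    rw [norm_div, norm_div, ← abs_symm a b]
  rw [h, ratio_sq a b ha hb]

lemma sum_bound' (z : ℕ → ℂ) (hz : ∀ n, z n ∈ ball (0 : ℂ) 1) (N n : ℕ) (hn : N ≤ n)
    (v : Finset ℕ) (hv : ∀ k ∈ v, N ≤ k) :
    ENNReal.ofReal (∑ k ∈ v, g z n k) ≤ rkConst (muN z N) ^ 2 := by
  have hinj : Function.Injective (fun x : {x // x ∈ v} => (⟨x.1, hv x.1 x.2⟩ : {k : ℕ // N ≤ k})) := by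
    intro a b hab
    exact Subtype.ext (by have h' := congrArg Subtype.val hab; exact h')
  have h := sum_bound z hz N n hn (v.attach.map ⟨_, hinj⟩)
  rw [Finset.sum_map] at h
  simp only [Function.Embedding.coeFn_mk] at h
  rwa [Finset.sum_attach v fun k => g z n k] at h

lemma sum_bound_real (z : ℕ → ℂ) (hz : ∀ n, z n ∈ ball (0 : ℂ) 1) (N n : ℕ) (hn : N ≤ n)
    (hfin : rkConst (muN z N) ^ 2 ≠ ⊤)
    (v : Finset ℕ) (hv : ∀ k ∈ v, N ≤ k) (hnv : n ∉ v) :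
    1 + ∑ k ∈ v, g z n k ≤ (rkConst (muN z N) ^ 2).toReal := by
  have h := sum_bound' z hz N n hn (insert n v) (fun k hk => by
    rcases Finset.mem_insert.1 hk with h | h
    · subst h; exact hn
    · exact hv k h)
  rw [Finset.sum_insert hnv, g_self z hz n] at h
  exact (ENNReal.ofReal_le_iff_le_toReal hfin).1 h

lemma fin_prod_lower {ι : Type*} (u : Finset ι) (t : ι → ℝ)
    (h0 : ∀ i ∈ u, 0 ≤ t i) (h1 : ∀ i ∈ u, t i ≤ 1) :
    1 - ∑ i ∈ u, t i ≤ ∏ i ∈ u, (1 - t i) := by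
  classical
  induction u using Finset.induction_on with
  | empty => simp
  | insert a u ha ih =>
    rw [Finset.sum_insert ha, Finset.prod_insert ha]
    have h0' : ∀ i ∈ u, 0 ≤ t i := fun i hi => h0 i (Finset.mem_insert_of_mem hi)
    have h1' : ∀ i ∈ u, t i ≤ 1 := fun i hi => h1 i (Finset.mem_insert_of_mem hi)
    have ih' := ih h0' h1'
    have ha0 : 0 ≤ t a := h0 a (Finset.mem_insert_self a u)
    have ha1 : t a ≤ 1 := h1 a (Finset.mem_insert_self a u)
    have hsum0 : 0 ≤ ∑ i ∈ u, t i := Finset.sum_nonneg h0'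
    nlinarith [ih']

lemma prod_lower {ι : Type*} (f t : ι → ℝ) (s : ℝ) (hs : 0 ≤ s)
    (hf : ∀ i, f i = 1 - t i) (ht0 : ∀ i, 0 ≤ t i) (hf0 : ∀ i, 0 ≤ f i)
    (hsum : ∀ u : Finset ι, ∑ i ∈ u, t i ≤ s) :
    1 - s ≤ ∏' i, f i := by
  by_cases hm : Multipliable f
  · refine ge_of_tendsto hm.hasProd (Filter.Eventually.of_forall fun u => ?_)
    have h1 : ∀ i ∈ u, t i ≤ 1 := fun i _ => by
      have := hf0 i; rw [hf i] at this; linarith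
    calc (1:ℝ) - s ≤ 1 - ∑ i ∈ u, t i := by linarith [hsum u]
      _ ≤ ∏ i ∈ u, (1 - t i) := fin_prod_lower u t (fun i _ => ht0 i) h1
      _ = ∏ i ∈ u, f i := Finset.prod_congr rfl fun i _ => (hf i).symm
  · rw [tprod_eq_one_of_not_multipliable hm]; linarith

lemma prod_upper {ι : Type*} (f : ι → ℝ) (hf0 : ∀ i, 0 ≤ f i) (hf1 : ∀ i, f i ≤ 1) :
    ∏' i, f i ≤ 1 := by
  by_cases hm : Multipliable f
  · exact le_of_tendsto hm.hasProd (Filter.Eventually.of_forall fun u =>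
      Finset.prod_le_one (fun i _ => hf0 i) (fun i _ => hf1 i))
  · rw [tprod_eq_one_of_not_multipliable hm]


lemma rho'_sq (z : ℕ → ℂ) (hz : ∀ n, z n ∈ ball (0 : ℂ) 1) (j k : ℕ) :
    ‖(z j - z k) / (1 - conj (z k) * z j)‖ ^ 2 = 1 - g z j k := by
  rw [ratio_sq (z j) (z k) (zabs_lt z hz j) (zabs_lt z hz k), g, abs_symm (z k) (z j)]
  ring

lemma rho'_le_one (z : ℕ → ℂ) (hz : ∀ n, z n ∈ ball (0 : ℂ) 1) (j k : ℕ) :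
    ‖(z j - z k) / (1 - conj (z k) * z j)‖ ≤ 1 := by
  have h := rho'_sq z hz j k
  have hg := g_nonneg z hz j k
  nlinarith [norm_nonneg ((z j - z k) / (1 - conj (z k) * z j))]

lemma blaschke_tail (z : ℕ → ℂ) (hz : ∀ n, z n ∈ ball (0 : ℂ) 1) (N₀ : ℕ)
    (v : Finset ℕ) (hv : ∀ k ∈ v, N₀ ≤ k) :
    ENNReal.ofReal (∑ k ∈ v, (1 - ‖z k‖ ^ 2)) ≤ rkConst (muN z N₀) ^ 2 := by
  have h0 : ‖(0 : ℂ)‖ < 1 := by simp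
  have h := rk_ge z N₀ 0 h0
  have heval : ∀ k : {k : ℕ // N₀ ≤ k},
      ENNReal.ofReal (1 - ‖z (k:ℕ)‖ ^ 2) *
        ENNReal.ofReal (‖evalH2 (ker2 0) (z (k:ℕ))‖ ^ 2)
      = ENNReal.ofReal (1 - ‖z (k:ℕ)‖ ^ 2) := by
    intro k
    rw [eval_ker 0 (z (k:ℕ)) h0 (zabs_lt z hz (k:ℕ))]
    simp
  rw [tsum_congr heval] at h
  simp only [norm_zero] at h
  norm_num at h
  refine le_trans ?_ h
  have hnn : ∀ k ∈ v, (0:ℝ) ≤ 1 - ‖z k‖ ^ 2 := fun k _ => by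
    have := zabs_lt z hz k; nlinarith [norm_nonneg (z k)]
  rw [ENNReal.ofReal_sum_of_nonneg hnn]
  have hinj : Function.Injective
      (fun x : {x // x ∈ v} => (⟨x.1, hv x.1 x.2⟩ : {k : ℕ // N₀ ≤ k})) := by
    intro a b hab; exact Subtype.ext (by have h' := congrArg Subtype.val hab; exact h')
  have hle := ENNReal.sum_le_tsum (f := fun k : {k : ℕ // N₀ ≤ k} =>
    ENNReal.ofReal (1 - ‖z (k:ℕ)‖ ^ 2)) (v.attach.map ⟨_, hinj⟩)
  rw [Finset.sum_map] at hle
  simp only [Function.Embedding.coeFn_mk] at hle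
  rwa [Finset.sum_attach v fun k => ENNReal.ofReal (1 - ‖z k‖ ^ 2)] at hle

lemma tendsto_one_sub (z : ℕ → ℂ) (hz : ∀ n, z n ∈ ball (0 : ℂ) 1) (N₀ : ℕ)
    (hfin : rkConst (muN z N₀) ^ 2 ≠ ⊤) :
    Tendsto (fun j => 1 - ‖z j‖ ^ 2) atTop (𝓝 0) := by
  set F := fun j : ℕ => 1 - ‖z j‖ ^ 2 with hF
  have hF0 : ∀ j, 0 ≤ F j := fun j => by
    have := zabs_lt z hz j; simp only [hF]; nlinarith [norm_nonneg (z j)]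
  have hsub : Summable (F ∘ (Subtype.val : ↥(Set.Ici N₀) → ℕ)) := by
    refine summable_of_sum_le (c := (rkConst (muN z N₀) ^ 2).toReal) (fun k => hF0 _) fun u => ?_
    have himg := blaschke_tail z hz N₀ (u.image Subtype.val)
      (fun k hk => by obtain ⟨x, _, rfl⟩ := Finset.mem_image.1 hk; exact x.2)
    rw [Finset.sum_image (fun a _ b _ h => Subtype.val_injective h)] at himg
    exact (ENNReal.ofReal_le_iff_le_toReal hfin).1 himg
  rw [summable_subtype_iff_indicator] at hsub
  refine (hsub.tendsto_atTop_zero).congr' ?_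
  filter_upwards [eventually_ge_atTop N₀] with j hj
  exact Set.indicator_of_mem (Set.mem_Ici.2 hj) F

lemma rho_tendsto (z : ℕ → ℂ) (hz : ∀ n, z n ∈ ball (0 : ℂ) 1) (N₀ : ℕ)
    (hfin : rkConst (muN z N₀) ^ 2 ≠ ⊤) (k : ℕ) :
    Tendsto (fun j => ‖(z j - z k) / (1 - conj (z k) * z j)‖) atTop (𝓝 1) := by
  have h0 := tendsto_one_sub z hz N₀ hfin
  have hzk := zabs_lt z hz k
  have hd0 : (0:ℝ) < 1 - ‖z k‖ := by linarith
  set C := (1 - ‖z k‖ ^ 2) / (1 - ‖z k‖) ^ 2 with hC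
  have hq : Tendsto (fun j => g z j k) atTop (𝓝 0) := by
    have hub : ∀ j, g z j k ≤ (1 - ‖z j‖ ^ 2) * C := by
      intro j
      have hzj := zabs_lt z hz j
      have habs : 1 - ‖z k‖ ≤ ‖1 - conj (z j) * z k‖ := by
        have h1 : ‖conj (z j) * z k‖ ≤ ‖z k‖ := by
          rw [norm_mul, Complex.norm_conj]
          nlinarith [norm_nonneg (z k), norm_nonneg (z j)]
        have h2 := norm_add_le (1 - conj (z j) * z k) (conj (z j) * z k)
        simp only [sub_add_cancel, norm_one] at h2
        linarith
      have hnum : (0:ℝ) ≤ (1 - ‖z k‖ ^ 2) * (1 - ‖z j‖ ^ 2) :=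
        mul_nonneg (by nlinarith [norm_nonneg (z k)]) (by nlinarith [norm_nonneg (z j)])
      have key : g z j k ≤ (1 - ‖z k‖ ^ 2) * (1 - ‖z j‖ ^ 2) /
          (1 - ‖z k‖) ^ 2 := by
        rw [g]
        refine div_le_div_of_nonneg_left hnum (by positivity) ?_
        nlinarith [norm_nonneg (1 - conj (z j) * z k)]
      calc g z j k ≤ (1 - ‖z k‖ ^ 2) * (1 - ‖z j‖ ^ 2) /
          (1 - ‖z k‖) ^ 2 := key
        _ = (1 - ‖z j‖ ^ 2) * C := by rw [hC]; ring
    have hupper : Tendsto (fun j => (1 - ‖z j‖ ^ 2) * C) atTop (𝓝 0) := by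
      simpa using h0.mul_const C
    exact tendsto_of_tendsto_of_tendsto_of_le_of_le tendsto_const_nhds hupper
      (fun j => g_nonneg z hz j k) hub
  have hf : (fun j => ‖(z j - z k) / (1 - conj (z k) * z j)‖)
      = fun j => Real.sqrt (1 - g z j k) := by
    funext j
    rw [← rho'_sq z hz j k, Real.sqrt_sq (norm_nonneg _)]
  rw [hf]
  have hone : Tendsto (fun j => 1 - g z j k) atTop (𝓝 1) := by
    simpa using tendsto_const_nhds.sub hq
  simpa using hone.sqrt

/-- If `ℛ(μ_N) → 1` for `μ_N = ∑_{k ≥ N} (1-|z k|²) δ_{z k}`, then for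
`n, k ≥ N`, `n ≠ k`, one has
`1 - ρ(z n, z k)² = (1-|z n|²)(1-|z k|²)/|1 - conj (z k) z n|² ≤ ℛ(μ_N)² - 1`, for every
`n ≥ N`, `∏_{k ≥ N, k ≠ n} |(z k - z n)/(1 - conj (z k) z n)|² ≥ 1 - (ℛ(μ_N)² - 1)`, and
`{z n}` is thin. -/
theorem thin_of_rkConst (z : ℕ → ℂ) (hz : ∀ n, z n ∈ ball (0 : ℂ) 1)
    (hR : Tendsto (fun N => rkConst (muN z N)) atTop (𝓝 (1 : ℝ≥0∞))) :
    (∀ N n k : ℕ, N ≤ n → N ≤ k → n ≠ k →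
      1 - rho (z n) (z k) ^ 2 =
        (1 - ‖z n‖ ^ 2) * (1 - ‖z k‖ ^ 2) /
          ‖1 - conj (z k) * z n‖ ^ 2 ∧
      ENNReal.ofReal ((1 - ‖z n‖ ^ 2) * (1 - ‖z k‖ ^ 2) /
          ‖1 - conj (z k) * z n‖ ^ 2) ≤ rkConst (muN z N) ^ 2 - 1) ∧
    (∀ N n : ℕ, N ≤ n →
      1 - (rkConst (muN z N) ^ 2 - 1) ≤
        ENNReal.ofReal (∏' k : {k : ℕ // N ≤ k ∧ k ≠ n},
          ‖(z (k : ℕ) - z n) / (1 - conj (z (k : ℕ)) * z n)‖ ^ 2)) ∧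
    IsThin z := by
  have habs := zabs_lt z hz
  refine ⟨?_, ?_, ?_⟩
  · -- Conclusion 1
    intro N n k hn hk hnk
    constructor
    · rw [rho, ratio_sq (z n) (z k) (habs n) (habs k)]; ring
    · have hnk' : n ∉ ({k} : Finset ℕ) := by simp [hnk]
      have h := sum_bound' z hz N n hn (insert n {k}) (fun x hx => by
        rcases Finset.mem_insert.1 hx with h | h
        · subst h; exact hn
        · rw [Finset.mem_singleton] at h; subst h; exact hk)
      rw [Finset.sum_insert hnk', g_self z hz n, Finset.sum_singleton] at h
      have hg : (1 - ‖z n‖ ^ 2) * (1 - ‖z k‖ ^ 2) /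
          ‖1 - conj (z k) * z n‖ ^ 2 = g z n k := by
        rw [g, abs_symm (z k) (z n)]; ring
      rw [hg]
      have heq : ENNReal.ofReal (g z n k) = ENNReal.ofReal (1 + g z n k) - 1 := by
        rw [← ENNReal.ofReal_one, ← ENNReal.ofReal_sub _ zero_le_one]
        norm_num
      rw [heq]
      exact tsub_le_tsub_right h 1
  · -- Conclusion 2
    intro N n hn
    by_cases hc : (1 : ℝ≥0∞) ≤ rkConst (muN z N) ^ 2 - 1
    · rw [tsub_eq_zero_of_le hc]; exact zero_le
    · push_neg at hc
      have hfin : rkConst (muN z N) ^ 2 ≠ ⊤ := by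
        intro h; rw [h] at hc; simp [lt_irrefl] at hc
      set s := (rkConst (muN z N) ^ 2 - 1).toReal with hs
      have hs0 : 0 ≤ s := ENNReal.toReal_nonneg
      have hofs : ENNReal.ofReal s = rkConst (muN z N) ^ 2 - 1 :=
        ENNReal.ofReal_toReal (ENNReal.sub_ne_top hfin)
      have h1le : (1 : ℝ≥0∞) ≤ rkConst (muN z N) ^ 2 := by
        have h := sum_bound' z hz N n hn {n} (by simp [hn])
        simpa [g_self z hz n] using h
      have hst : s = (rkConst (muN z N) ^ 2).toReal - 1 := by
        rw [hs, ENNReal.toReal_sub_of_le h1le hfin, ENNReal.toReal_one]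
      have hsum : ∀ u : Finset {k : ℕ // N ≤ k ∧ k ≠ n}, ∑ i ∈ u, g z n (i : ℕ) ≤ s := by
        intro u
        have hb := sum_bound_real z hz N n hn hfin (u.image Subtype.val)
          (fun k hk => by obtain ⟨x, _, rfl⟩ := Finset.mem_image.1 hk; exact x.2.1)
          (fun hmem => by obtain ⟨x, _, hxx⟩ := Finset.mem_image.1 hmem; exact x.2.2 hxx)
        rw [Finset.sum_image (fun a _ b _ h => Subtype.val_injective h)] at hb
        rw [hst]; linarith
      have hfac : ∀ i : {k : ℕ // N ≤ k ∧ k ≠ n},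
          ‖(z (i : ℕ) - z n) / (1 - conj (z (i : ℕ)) * z n)‖ ^ 2
            = 1 - g z n (i : ℕ) := by
        intro i
        rw [ratio_sq' (z (i : ℕ)) (z n) (habs _) (habs n), g]
      have hprod := prod_lower
        (fun i : {k : ℕ // N ≤ k ∧ k ≠ n} =>
          ‖(z (i : ℕ) - z n) / (1 - conj (z (i : ℕ)) * z n)‖ ^ 2)
        (fun i => g z n (i : ℕ)) s hs0 hfac (fun i => g_nonneg z hz n _)
        (fun i => by positivity) hsum
      calc (1 : ℝ≥0∞) - (rkConst (muN z N) ^ 2 - 1)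
          = ENNReal.ofReal (1 - s) := by
            rw [ENNReal.ofReal_sub _ hs0, ENNReal.ofReal_one, hofs]
        _ ≤ _ := ENNReal.ofReal_le_ofReal hprod
  · -- Thinness
    rw [IsThin, Metric.tendsto_atTop]
    intro ε hε
    set η := min (ε / 4) (2⁻¹ : ℝ) with hηdef
    have hη0 : 0 < η := lt_min (by linarith) (by norm_num)
    have hη1 : η ≤ 1 / 2 := by
      calc η ≤ (2⁻¹ : ℝ) := min_le_right _ _
        _ = 1 / 2 := by norm_num
    have hηε : η ≤ ε / 4 := min_le_left _ _
    have hsq2 : Tendsto (fun N => rkConst (muN z N) ^ 2) atTop (𝓝 1) := by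
      have h := ENNReal.Tendsto.mul hR (by simp) hR (by simp)
      rw [one_mul] at h
      simpa [pow_two] using h
    have hev : ∀ᶠ N in atTop, rkConst (muN z N) ^ 2 < 1 + ENNReal.ofReal η :=
      hsq2.eventually_lt_const (ENNReal.lt_add_right ENNReal.one_ne_top
        (ENNReal.ofReal_pos.mpr hη0).ne')
    obtain ⟨N, hN⟩ := hev.exists
    have htop : (1 : ℝ≥0∞) + ENNReal.ofReal η ≠ ⊤ := by
      simp [ENNReal.add_eq_top, ENNReal.ofReal_ne_top]
    have hfin : rkConst (muN z N) ^ 2 ≠ ⊤ := (hN.trans_le (le_of_eq rfl)).ne_top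
    have hrk : (rkConst (muN z N) ^ 2).toReal ≤ 1 + η := by
      have h := ENNReal.toReal_mono htop hN.le
      rwa [ENNReal.toReal_add ENNReal.one_ne_top ENNReal.ofReal_ne_top, ENNReal.toReal_one,
        ENNReal.toReal_ofReal hη0.le] at h
    have htail : ∀ j, N ≤ j → ∀ v : Finset ℕ, (∀ k ∈ v, N ≤ k) → j ∉ v →
        ∑ k ∈ v, g z j k ≤ η := by
      intro j hj v hv hjv
      have h := sum_bound_real z hz N j hj hfin v hv hjv
      linarith
    have hPt : Tendsto (fun j => ∏ k ∈ Finset.range N,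
        ‖(z j - z k) / (1 - conj (z k) * z j)‖) atTop (𝓝 1) := by
      have h := tendsto_finset_prod
        (f := fun k j => ‖(z j - z k) / (1 - conj (z k) * z j)‖)
        (a := fun _ => 1) (Finset.range N)
        (fun k _ => rho_tendsto z hz N hfin k)
      simpa using h
    have hPev : ∀ᶠ j in atTop, 1 - η < ∏ k ∈ Finset.range N,
        ‖(z j - z k) / (1 - conj (z k) * z j)‖ :=
      hPt.eventually_const_lt (by linarith)
    obtain ⟨N₁, hN₁⟩ := eventually_atTop.1 (hPev.and (eventually_ge_atTop N))
    refine ⟨N₁, fun j hj => ?_⟩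
    obtain ⟨hPj, hjN⟩ := hN₁ j hj
    set P := ∏ k ∈ Finset.range N, ‖(z j - z k) / (1 - conj (z k) * z j)‖ with hPdef
    have hP1 : P ≤ 1 := Finset.prod_le_one (fun _ _ => norm_nonneg _)
      (fun k _ => rho'_le_one z hz j k)
    have hP0 : (0 : ℝ) ≤ P := Finset.prod_nonneg fun _ _ => norm_nonneg _
    have hup : delta z j ≤ 1 := prod_upper _ (fun i => norm_nonneg _)
      (fun i => rho'_le_one z hz j (i : ℕ))
    have hlow : P * (1 - η) ≤ delta z j := by
      rw [delta]
      by_cases hm : Multipliable (fun k : {k : ℕ // k ≠ j} =>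
        ‖(z j - z (k : ℕ)) / (1 - conj (z (k : ℕ)) * z j)‖)
      · refine ge_of_tendsto hm.hasProd (Filter.Eventually.of_forall fun u => ?_)
        classical
        set v := u.image Subtype.val with hvdef
        have hprod_eq : ∏ k ∈ v, ‖(z j - z k) / (1 - conj (z k) * z j)‖
            = ∏ i ∈ u, ‖(z j - z (i : ℕ)) / (1 - conj (z (i : ℕ)) * z j)‖ := by
          rw [hvdef]
          exact Finset.prod_image (fun a _ b _ h => Subtype.val_injective h)
        rw [← hprod_eq]
        have hjv : j ∉ v := fun hmem => by
          obtain ⟨x, _, hx⟩ := Finset.mem_image.1 hmem; exact x.2 hx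
        rw [← Finset.prod_filter_mul_prod_filter_not v (fun k => k < N)]
        have h₁ : P ≤ ∏ k ∈ v.filter (fun k => k < N),
            ‖(z j - z k) / (1 - conj (z k) * z j)‖ := by
          have hsub : v.filter (fun k => k < N) ⊆ Finset.range N := fun x hx =>
            Finset.mem_range.2 (Finset.mem_filter.1 hx).2
          have hspl := Finset.prod_sdiff hsub
            (f := fun k => ‖(z j - z k) / (1 - conj (z k) * z j)‖)
          have hc1 : ∏ k ∈ Finset.range N \ v.filter (fun k => k < N),
              ‖(z j - z k) / (1 - conj (z k) * z j)‖ ≤ 1 :=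
            Finset.prod_le_one (fun _ _ => norm_nonneg _)
              (fun k _ => rho'_le_one z hz j k)
          have hp0 : (0 : ℝ) ≤ ∏ k ∈ v.filter (fun k => k < N),
              ‖(z j - z k) / (1 - conj (z k) * z j)‖ :=
            Finset.prod_nonneg fun _ _ => norm_nonneg _
          calc P = _ * _ := hspl.symm
            _ ≤ 1 * _ := mul_le_mul_of_nonneg_right hc1 hp0
            _ = _ := one_mul _
        have h₂ : 1 - η ≤ ∏ k ∈ v.filter (fun k => ¬ k < N),
            ‖(z j - z k) / (1 - conj (z k) * z j)‖ := by
          have hb := fin_prod_lower (v.filter (fun k => ¬ k < N))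
            (fun k => 1 - ‖(z j - z k) / (1 - conj (z k) * z j)‖)
            (fun k _ => by linarith [rho'_le_one z hz j k])
            (fun k _ => by linarith [norm_nonneg ((z j - z k) / (1 - conj (z k) * z j))])
          simp only [sub_sub_cancel] at hb
          refine le_trans ?_ hb
          have hv₂N : ∀ k ∈ v.filter (fun k => ¬ k < N), N ≤ k := fun k hk =>
            le_of_not_gt (Finset.mem_filter.1 hk).2
          have hjv₂ : j ∉ v.filter (fun k => ¬ k < N) := fun h =>
            hjv (Finset.filter_subset _ _ h)
          have hgb := htail j hjN (v.filter (fun k => ¬ k < N)) hv₂N hjv₂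
          have hterm : ∀ k ∈ v.filter (fun k => ¬ k < N),
              1 - ‖(z j - z k) / (1 - conj (z k) * z j)‖ ≤ g z j k := by
            intro k _
            have hsq := rho'_sq z hz j k
            nlinarith [rho'_le_one z hz j k,
              norm_nonneg ((z j - z k) / (1 - conj (z k) * z j))]
          have hss := Finset.sum_le_sum hterm
          have : ∑ k ∈ v.filter (fun k => ¬ k < N),
              (1 - ‖(z j - z k) / (1 - conj (z k) * z j)‖) ≤ η :=
            le_trans hss hgb
          linarith
        exact mul_le_mul h₁ h₂ (by linarith) (le_trans hP0 h₁)
      · rw [tprod_eq_one_of_not_multipliable hm]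
        nlinarith
    have hd1 : (1 - η) * (1 - η) ≤ delta z j := by
      refine le_trans ?_ hlow
      nlinarith
    rw [Real.dist_eq, abs_lt]
    constructor <;> nlinarith

end ThinPaper
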